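/- Let ρ:ℝ→ℝ be convex, bounded below, and twice differentiable with bounded second derivative, with a unique minimizer c₀ ∈ ℝ. Fix τ > 0, let W be a random variable with finite second moment and Z ~ N(0,1) independent of W, and define G:ℝ_{>0}→ℝ by G(b) = E[Ψ'(W + τZ; b)], where Ψ' denotes the derivative of Ψ(·;b) in its first argument. Then G is continuous, lim_{b→0} G(b) = 0, lim_{b→∞} G(b) = 1, and consequently for every a ∈ (0,1) the solution set S_a = {b ∈ ℝ_{>0} : G(b) = a} is closed and nonempty. -/

import Mathlib

open MeasureTheory ProbabilityTheory Filter Set Real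

/-- `prox ρ b z = argmin_x { ρ(x) + (x-z)²/(2b) }`. -/
noncomputable def prox (ρ : ℝ → ℝ) (b z : ℝ) : ℝ :=
  Classical.epsilon fun x => ∀ y, ρ x + (x - z) ^ 2 / (2 * b) ≤ ρ y + (y - z) ^ 2 / (2 * b)

/-- The effective score `Ψ(z;b) = b·ρ'(Prox(z;b))`. -/
noncomputable def effScore (ρ : ℝ → ℝ) (b z : ℝ) : ℝ := b * deriv ρ (prox ρ b z)

/-- `Ψ'(z;b)`, the derivative of the effective score in its first argument. -/
noncomputable def effScoreD (ρ : ℝ → ℝ) (b z : ℝ) : ℝ := deriv (effScore ρ b) z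

/-- The standard Gaussian measure on `ℝ`. -/
noncomputable def stdGauss : Measure ℝ := gaussianReal 0 1

instance : IsProbabilityMeasure stdGauss :=
  inferInstanceAs (IsProbabilityMeasure (gaussianReal 0 1))

section ProxAux

variable {ρ : ℝ → ℝ} {b z x c₀ : ℝ}

lemma mono_deriv (hconv : ConvexOn ℝ Set.univ ρ) (hd1 : Differentiable ℝ ρ) :
    Monotone (deriv ρ) :=
  monotoneOn_univ.mp (hconv.monotoneOn_deriv fun x _ => hd1 x)

lemma deriv_min (hc₀ : IsMinOn ρ Set.univ c₀) : deriv ρ c₀ = 0 :=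
  (hc₀.isLocalMin univ_mem).deriv_eq_zero

lemma isMinOn_of_deriv_zero (hconv : ConvexOn ℝ Set.univ ρ) (hd1 : Differentiable ℝ ρ)
    (hx : deriv ρ x = 0) : IsMinOn ρ Set.univ x := by
  refine isMinOn_iff.mpr fun y _ => ?_
  rcases lt_trichotomy x y with h | h | h
  · have h1 := hconv.deriv_le_slope (mem_univ x) (mem_univ y) h (hd1 x)
    rw [hx, slope_def_field] at h1
    have h2 : 0 * (y - x) ≤ ρ y - ρ x := by
      rwa [le_div_iff₀ (by linarith)] at h1
    linarith
  · exact h ▸ le_rfl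
  · have h1 := hconv.slope_le_deriv (mem_univ y) (mem_univ x) h (hd1 x)
    rw [hx, slope_def_field] at h1
    have h2 : ρ x - ρ y ≤ 0 * (x - y) := by
      rwa [div_le_iff₀ (by linarith)] at h1
    linarith

lemma deriv2_nonneg (hconv : ConvexOn ℝ Set.univ ρ) (hd1 : Differentiable ℝ ρ)
    (hd2 : Differentiable ℝ (deriv ρ)) (x : ℝ) : 0 ≤ deriv (deriv ρ) x := by
  have hmono := mono_deriv hconv hd1
  have ht := hasDerivAt_iff_tendsto_slope.mp (hd2 x).hasDerivAt
  refine ge_of_tendsto ht ?_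
  filter_upwards [self_mem_nhdsWithin] with y (hy : y ≠ x)
  rw [slope_def_field]
  rcases lt_or_gt_of_ne hy with h | h
  · have : deriv ρ y - deriv ρ x ≤ 0 := sub_nonpos.mpr (hmono h.le)
    have hyx : y - x < 0 := by linarith
    exact div_nonneg_of_nonpos this hyx.le
  · exact div_nonneg (sub_nonneg.mpr (hmono h.le)) (by linarith)

end ProxAux

section ProxChar

variable {ρ : ℝ → ℝ} {b z x y c₀ : ℝ}

lemma prox_add_eq (hbdd : BddBelow (Set.range ρ)) (hd1 : Differentiable ℝ ρ)
    (hb : 0 < b) (z : ℝ) :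
    prox ρ b z + b * deriv ρ (prox ρ b z) = z := by
  set F : ℝ → ℝ := fun x => ρ x + (x - z) ^ 2 / (2 * b) with hF
  obtain ⟨C, hC⟩ := hbdd
  have hC' : ∀ x, C ≤ ρ x := fun x => hC (mem_range_self x)
  -- existence of a global minimizer
  have hex : ∃ x, ∀ y, F x ≤ F y := by
    set R : ℝ := Real.sqrt (2 * b * (ρ z - C + 1)) with hR
    have hRnn : 0 ≤ R := Real.sqrt_nonneg _
    have hFcont : Continuous F := by
      exact (hd1.continuous.add (by fun_prop))
    obtain ⟨x₀, hx₀mem, hx₀⟩ :=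
      (isCompact_Icc (a := z - R) (b := z + R)).exists_isMinOn
        ⟨z, by constructor <;> linarith⟩ hFcont.continuousOn
    refine ⟨x₀, fun y => ?_⟩
    by_cases hy : y ∈ Icc (z - R) (z + R)
    · exact hx₀ hy
    · have hFx₀ : F x₀ ≤ F z := hx₀ ⟨by linarith, by linarith⟩
      have hFz : F z = ρ z := by simp [hF]
      have hyR : R < |y - z| := by
        rcases not_and_or.mp hy with h | h
        · push_neg at h
          rw [abs_of_neg (by linarith)]; linarith
        · push_neg at h
          rw [abs_of_pos (by linarith)]; linarith
      have hsq : 2 * b * (ρ z - C + 1) ≤ (y - z) ^ 2 := by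
        have h1 : R ^ 2 ≤ (y - z) ^ 2 := by
          rw [← sq_abs (y - z)]
          exact pow_le_pow_left₀ hRnn hyR.le 2
        rwa [hR, Real.sq_sqrt (by nlinarith [hC' z])] at h1
      have : ρ z + 1 ≤ F y := by
        have h2 : (ρ z - C + 1) ≤ (y - z) ^ 2 / (2 * b) := by
          rw [le_div_iff₀ (by linarith)]; linarith
        have := hC' y
        simp only [hF]; linarith
      linarith
  have hmin : ∀ y, F (prox ρ b z) ≤ F y := Classical.epsilon_spec hex
  -- derivative at the minimizer vanishes
  set p := prox ρ b z with hp
  have hder : HasDerivAt F (deriv ρ p + (p - z) / b) p := by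
    have h1 : HasDerivAt (fun x : ℝ => (x - z) ^ 2 / (2 * b)) (2 * (p - z) ^ 1 * 1 / (2 * b)) p :=
      (((hasDerivAt_id p).sub_const z).pow 2).div_const (2 * b)
    have h2 := (hd1 p).hasDerivAt.add h1
    refine h2.congr_deriv ?_
    ring
  have hloc : IsLocalMin F p := (isMinOn_iff.mpr fun y _ => hmin y).isLocalMin univ_mem
  have h0 : deriv ρ p + (p - z) / b = 0 := by
    rw [← hder.deriv]; exact hloc.deriv_eq_zero
  field_simp at h0
  linarith

lemma prox_unique (hconv : ConvexOn ℝ Set.univ ρ) (hbdd : BddBelow (Set.range ρ))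
    (hd1 : Differentiable ℝ ρ) (hb : 0 < b) (hx : x + b * deriv ρ x = z) :
    prox ρ b z = x := by
  have h1 := prox_add_eq hbdd hd1 hb z
  set p := prox ρ b z
  have hmono := mono_deriv hconv hd1
  rcases lt_trichotomy p x with h | h | h
  · have := hmono h.le
    nlinarith
  · exact h
  · have := hmono h.le
    nlinarith

end ProxChar

section ProxProps

variable {ρ : ℝ → ℝ} {b b' z z₁ z₂ x c₀ : ℝ}

lemma prox_lip (hconv : ConvexOn ℝ Set.univ ρ) (hbdd : BddBelow (Set.range ρ))
    (hd1 : Differentiable ℝ ρ) (hb : 0 < b) (z₁ z₂ : ℝ) :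
    |prox ρ b z₁ - prox ρ b z₂| ≤ |z₁ - z₂| := by
  have h1 := prox_add_eq hbdd hd1 hb z₁
  have h2 := prox_add_eq hbdd hd1 hb z₂
  set p := prox ρ b z₁; set q := prox ρ b z₂
  have hmono := mono_deriv hconv hd1
  rcases le_total q p with h | h
  · have hd := hmono h
    have h3 : p - q ≤ z₁ - z₂ := by nlinarith
    rw [abs_of_nonneg (by linarith)]
    exact h3.trans (le_abs_self _)
  · have hd := hmono h
    have h3 : q - p ≤ z₂ - z₁ := by nlinarith
    rw [abs_of_nonpos (by linarith), abs_sub_comm]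
    have : -(p - q) = q - p := by ring
    rw [this]
    exact h3.trans (le_abs_self _)

lemma prox_mono (hconv : ConvexOn ℝ Set.univ ρ) (hbdd : BddBelow (Set.range ρ))
    (hd1 : Differentiable ℝ ρ) (hb : 0 < b) : Monotone (prox ρ b) := by
  intro z₁ z₂ hz
  by_contra hc
  push_neg at hc
  have h1 := prox_add_eq hbdd hd1 hb z₁
  have h2 := prox_add_eq hbdd hd1 hb z₂
  have hd := mono_deriv hconv hd1 hc.le
  nlinarith

lemma prox_continuous (hconv : ConvexOn ℝ Set.univ ρ) (hbdd : BddBelow (Set.range ρ))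
    (hd1 : Differentiable ℝ ρ) (hb : 0 < b) : Continuous (prox ρ b) := by
  refine (LipschitzWith.of_dist_le_mul (K := 1) fun x y => ?_).continuous
  rw [Real.dist_eq, Real.dist_eq, NNReal.coe_one, one_mul]
  exact prox_lip hconv hbdd hd1 hb x y

lemma prox_c₀ (hconv : ConvexOn ℝ Set.univ ρ) (hbdd : BddBelow (Set.range ρ))
    (hd1 : Differentiable ℝ ρ) (hc₀ : IsMinOn ρ Set.univ c₀) (hb : 0 < b) :
    prox ρ b c₀ = c₀ :=
  prox_unique hconv hbdd hd1 hb (by rw [deriv_min hc₀]; ring)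

lemma prox_dist_c₀ (hconv : ConvexOn ℝ Set.univ ρ) (hbdd : BddBelow (Set.range ρ))
    (hd1 : Differentiable ℝ ρ) (hc₀ : IsMinOn ρ Set.univ c₀) (hb : 0 < b) (z : ℝ) :
    |prox ρ b z - c₀| ≤ |z - c₀| := by
  have := prox_lip hconv hbdd hd1 hb z c₀
  rwa [prox_c₀ hconv hbdd hd1 hc₀ hb] at this

lemma prox_b_lip (hconv : ConvexOn ℝ Set.univ ρ) (hbdd : BddBelow (Set.range ρ))
    (hd1 : Differentiable ℝ ρ) (hb : 0 < b) (hb' : 0 < b') (z : ℝ) :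
    |prox ρ b z - prox ρ b' z| ≤ |b - b'| * |deriv ρ (prox ρ b' z)| := by
  have h1 := prox_add_eq hbdd hd1 hb z
  have h2 := prox_add_eq hbdd hd1 hb' z
  set p := prox ρ b z; set q := prox ρ b' z
  have hmono := mono_deriv hconv hd1
  rcases le_total q p with h | h
  · have hd := hmono h
    have h3 : p - q ≤ (b' - b) * deriv ρ q := by nlinarith
    rw [abs_of_nonneg (by linarith)]
    calc p - q ≤ (b' - b) * deriv ρ q := h3
      _ ≤ |(b' - b) * deriv ρ q| := le_abs_self _
      _ = |b - b'| * |deriv ρ q| := by rw [abs_mul, abs_sub_comm]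
  · have hd := hmono h
    have h3 : q - p ≤ (b - b') * deriv ρ q := by nlinarith
    rw [abs_of_nonpos (by linarith)]
    calc -(p - q) = q - p := by ring
      _ ≤ (b - b') * deriv ρ q := h3
      _ ≤ |(b - b') * deriv ρ q| := le_abs_self _
      _ = |b - b'| * |deriv ρ q| := by rw [abs_mul]

lemma prox_hasDerivAt (hconv : ConvexOn ℝ Set.univ ρ) (hbdd : BddBelow (Set.range ρ))
    (hd1 : Differentiable ℝ ρ) (hd2 : Differentiable ℝ (deriv ρ)) (hb : 0 < b) (z : ℝ) :
    HasDerivAt (prox ρ b) (1 + b * deriv (deriv ρ) (prox ρ b z))⁻¹ z := by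
  have hpos : 0 < 1 + b * deriv (deriv ρ) (prox ρ b z) := by
    have := deriv2_nonneg hconv hd1 hd2 (prox ρ b z)
    nlinarith
  refine HasDerivAt.of_local_left_inverse
    ((prox_continuous hconv hbdd hd1 hb).continuousAt)
    (((hasDerivAt_id (prox ρ b z)).add (((hd2 (prox ρ b z)).hasDerivAt).const_mul b)))
    hpos.ne' ?_
  filter_upwards with y
  simpa using prox_add_eq hbdd hd1 hb y

lemma effScore_eq (hbdd : BddBelow (Set.range ρ)) (hd1 : Differentiable ℝ ρ)
    (hb : 0 < b) (z : ℝ) : effScore ρ b z = z - prox ρ b z := by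
  have := prox_add_eq hbdd hd1 hb z
  unfold effScore
  linarith

lemma effScoreD_eq (hconv : ConvexOn ℝ Set.univ ρ) (hbdd : BddBelow (Set.range ρ))
    (hd1 : Differentiable ℝ ρ) (hd2 : Differentiable ℝ (deriv ρ)) (hb : 0 < b) (z : ℝ) :
    effScoreD ρ b z = 1 - (1 + b * deriv (deriv ρ) (prox ρ b z))⁻¹ := by
  have h : HasDerivAt (effScore ρ b) (1 - (1 + b * deriv (deriv ρ) (prox ρ b z))⁻¹) z := by
    have he : effScore ρ b = fun y => y - prox ρ b y :=
      funext fun y => effScore_eq hbdd hd1 hb y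
    rw [he]
    exact (hasDerivAt_id z).sub (prox_hasDerivAt hconv hbdd hd1 hd2 hb z)
  exact h.deriv

end ProxProps

section Bounds

variable {ρ : ℝ → ℝ} {b z x c₀ M : ℝ}

lemma effScoreD_nonneg (hconv : ConvexOn ℝ Set.univ ρ) (hbdd : BddBelow (Set.range ρ))
    (hd1 : Differentiable ℝ ρ) (hd2 : Differentiable ℝ (deriv ρ)) (hb : 0 < b) (z : ℝ) :
    0 ≤ effScoreD ρ b z := by
  rw [effScoreD_eq hconv hbdd hd1 hd2 hb z]
  set q := b * deriv (deriv ρ) (prox ρ b z) with hq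
  have hq0 : 0 ≤ q := mul_nonneg hb.le (deriv2_nonneg hconv hd1 hd2 _)
  have key : 1 - (1 + q)⁻¹ = q / (1 + q) := by
    field_simp
    ring
  rw [key]
  positivity

lemma effScoreD_le_one (hconv : ConvexOn ℝ Set.univ ρ) (hbdd : BddBelow (Set.range ρ))
    (hd1 : Differentiable ℝ ρ) (hd2 : Differentiable ℝ (deriv ρ)) (hb : 0 < b) (z : ℝ) :
    effScoreD ρ b z ≤ 1 := by
  rw [effScoreD_eq hconv hbdd hd1 hd2 hb z]
  set q := b * deriv (deriv ρ) (prox ρ b z) with hq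
  have hq0 : 0 ≤ q := mul_nonneg hb.le (deriv2_nonneg hconv hd1 hd2 _)
  have : 0 ≤ (1 + q)⁻¹ := by positivity
  linarith

lemma effScoreD_le_mul (hconv : ConvexOn ℝ Set.univ ρ) (hbdd : BddBelow (Set.range ρ))
    (hd1 : Differentiable ℝ ρ) (hd2 : Differentiable ℝ (deriv ρ))
    (hM : ∀ x, deriv (deriv ρ) x ≤ M) (hb : 0 < b) (z : ℝ) :
    effScoreD ρ b z ≤ b * M := by
  rw [effScoreD_eq hconv hbdd hd1 hd2 hb z]
  set q := b * deriv (deriv ρ) (prox ρ b z) with hq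
  have hq0 : 0 ≤ q := mul_nonneg hb.le (deriv2_nonneg hconv hd1 hd2 _)
  have hqM : q ≤ b * M := mul_le_mul_of_nonneg_left (hM _) hb.le
  have key : 1 - (1 + q)⁻¹ = q / (1 + q) := by field_simp; ring
  rw [key]
  have h1 : q / (1 + q) ≤ q := by
    rw [div_le_iff₀ (by linarith)]
    nlinarith
  linarith

lemma deriv_pos_of_gt (hconv : ConvexOn ℝ Set.univ ρ) (hd1 : Differentiable ℝ ρ)
    (hc₀ : IsMinOn ρ Set.univ c₀)
    (hc₀uniq : ∀ x, IsMinOn ρ Set.univ x → x = c₀) (hx : c₀ < x) : 0 < deriv ρ x := by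
  rcases lt_or_ge 0 (deriv ρ x) with h | h
  · exact h
  · exfalso
    have h0 : deriv ρ x = 0 := by
      have h1 := mono_deriv hconv hd1 hx.le
      have h2 := deriv_min hc₀
      linarith
    have := hc₀uniq x (isMinOn_of_deriv_zero hconv hd1 h0)
    linarith

lemma deriv_neg_of_lt (hconv : ConvexOn ℝ Set.univ ρ) (hd1 : Differentiable ℝ ρ)
    (hc₀ : IsMinOn ρ Set.univ c₀)
    (hc₀uniq : ∀ x, IsMinOn ρ Set.univ x → x = c₀) (hx : x < c₀) : deriv ρ x < 0 := by
  rcases lt_or_ge (deriv ρ x) 0 with h | h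
  · exact h
  · exfalso
    have h0 : deriv ρ x = 0 := by
      have h1 := mono_deriv hconv hd1 hx.le
      have h2 := deriv_min hc₀
      linarith
    have := hc₀uniq x (isMinOn_of_deriv_zero hconv hd1 h0)
    linarith

end Bounds

section Tendsto

variable {ρ : ℝ → ℝ} {b₀ c₀ : ℝ}

lemma prox_tendsto_b (hconv : ConvexOn ℝ Set.univ ρ) (hbdd : BddBelow (Set.range ρ))
    (hd1 : Differentiable ℝ ρ) (hb₀ : 0 < b₀) (y : ℝ) :
    Tendsto (fun b => prox ρ b y) (nhdsWithin b₀ (Set.Ioi 0)) (nhds (prox ρ b₀ y)) := by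
  set A := |deriv ρ (prox ρ b₀ y)|
  have h1 : Tendsto (fun b => |b - b₀| * A) (nhdsWithin b₀ (Set.Ioi 0)) (nhds 0) := by
    have : Tendsto (fun b : ℝ => |b - b₀| * A) (nhds b₀) (nhds (|b₀ - b₀| * A)) :=
      (((continuous_id.sub continuous_const).abs.mul continuous_const).tendsto b₀)
    simpa using this.mono_left nhdsWithin_le_nhds
  have h2 : Tendsto (fun b => prox ρ b y - prox ρ b₀ y)
      (nhdsWithin b₀ (Set.Ioi 0)) (nhds 0) := by
    apply squeeze_zero_norm' _ h1
    filter_upwards [self_mem_nhdsWithin] with b (hb : b ∈ Set.Ioi 0)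
    exact prox_b_lip hconv hbdd hd1 hb hb₀ y
  have := h2.add_const (prox ρ b₀ y)
  simpa using this

lemma prox_tendsto_atTop (hconv : ConvexOn ℝ Set.univ ρ) (hbdd : BddBelow (Set.range ρ))
    (hd1 : Differentiable ℝ ρ) (hc₀ : IsMinOn ρ Set.univ c₀)
    (hc₀uniq : ∀ x, IsMinOn ρ Set.univ x → x = c₀) (y : ℝ) :
    Tendsto (fun b => prox ρ b y) atTop (nhds c₀) := by
  rw [Metric.tendsto_atTop]
  intro ε hε
  rcases lt_trichotomy y c₀ with hy | hy | hy
  · -- y < c₀ : prox ∈ [y, c₀]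
    set δ := -deriv ρ (c₀ - ε / 2) with hδ
    have hδpos : 0 < δ := by
      have := deriv_neg_of_lt hconv hd1 hc₀ hc₀uniq (show c₀ - ε / 2 < c₀ by linarith)
      rw [hδ]; linarith
    refine ⟨max 1 ((c₀ - y) / δ + 1), fun b hb => ?_⟩
    have hb1 : (1 : ℝ) ≤ b := le_trans (le_max_left _ _) hb
    have hb0 : 0 < b := by linarith
    have hbN : (c₀ - y) / δ + 1 ≤ b := le_trans (le_max_right _ _) hb
    set p := prox ρ b y with hp
    have hkey := prox_add_eq hbdd hd1 hb0 y
    have hple : p ≤ c₀ := by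
      have := prox_mono hconv hbdd hd1 hb0 hy.le
      rwa [prox_c₀ hconv hbdd hd1 hc₀ hb0] at this
    have hpge : y ≤ p := by
      have := prox_dist_c₀ hconv hbdd hd1 hc₀ hb0 y
      rw [abs_of_nonpos (by linarith : p - c₀ ≤ 0),
        abs_of_nonpos (by linarith : y - c₀ ≤ 0)] at this
      linarith
    have hclose : c₀ - ε / 2 < p := by
      by_contra hcon
      push_neg at hcon
      have hdp : deriv ρ p ≤ -δ := by
        have := mono_deriv hconv hd1 hcon
        rw [hδ]; linarith
      have hbd : b * δ ≤ c₀ - y := by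
        have h1 : b * deriv ρ p = y - p := by linarith
        nlinarith
      have : b ≤ (c₀ - y) / δ := (le_div_iff₀ hδpos).mpr hbd
      linarith
    rw [Real.dist_eq, abs_of_nonpos (by linarith : p - c₀ ≤ 0)]
    linarith
  · refine ⟨1, fun b hb => ?_⟩
    have hb0 : (0 : ℝ) < b := by linarith
    rw [hy, prox_c₀ hconv hbdd hd1 hc₀ hb0]
    simpa using hε
  · -- c₀ < y : prox ∈ [c₀, y]
    set δ := deriv ρ (c₀ + ε / 2) with hδ
    have hδpos : 0 < δ :=
      deriv_pos_of_gt hconv hd1 hc₀ hc₀uniq (show c₀ < c₀ + ε / 2 by linarith)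
    refine ⟨max 1 ((y - c₀) / δ + 1), fun b hb => ?_⟩
    have hb1 : (1 : ℝ) ≤ b := le_trans (le_max_left _ _) hb
    have hb0 : 0 < b := by linarith
    have hbN : (y - c₀) / δ + 1 ≤ b := le_trans (le_max_right _ _) hb
    set p := prox ρ b y with hp
    have hkey := prox_add_eq hbdd hd1 hb0 y
    have hpge : c₀ ≤ p := by
      have := prox_mono hconv hbdd hd1 hb0 hy.le
      rwa [prox_c₀ hconv hbdd hd1 hc₀ hb0] at this
    have hple : p ≤ y := by
      have := prox_dist_c₀ hconv hbdd hd1 hc₀ hb0 y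
      rw [abs_of_nonneg (by linarith : (0:ℝ) ≤ p - c₀),
        abs_of_nonneg (by linarith : (0:ℝ) ≤ y - c₀)] at this
      linarith
    have hclose : p < c₀ + ε / 2 := by
      by_contra hcon
      push_neg at hcon
      have hdp : δ ≤ deriv ρ p := mono_deriv hconv hd1 hcon
      have hbd : b * δ ≤ y - c₀ := by
        have h1 : b * deriv ρ p = y - p := by linarith
        nlinarith
      have : b ≤ (y - c₀) / δ := (le_div_iff₀ hδpos).mpr hbd
      linarith
    rw [Real.dist_eq, abs_of_nonneg (by linarith : (0:ℝ) ≤ p - c₀)]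
    linarith

end Tendsto

section Phi

noncomputable def phi : ℝ → ℝ := gaussianPDFReal 0 1

lemma phi_eq (x : ℝ) : phi x = (Real.sqrt (2 * π))⁻¹ * Real.exp (-x ^ 2 / 2) := by
  simp [phi, gaussianPDFReal]

lemma phi_def : phi = fun x => (Real.sqrt (2 * π))⁻¹ * Real.exp (-x ^ 2 / 2) :=
  funext phi_eq

lemma phi_nonneg (x : ℝ) : 0 ≤ phi x := gaussianPDFReal_nonneg 0 1 x

lemma phi_continuous : Continuous phi := by
  rw [phi_def]
  fun_prop

lemma phi_hasDerivAt (x : ℝ) : HasDerivAt phi (-x * phi x) x := by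
  have h1 : HasDerivAt (fun y : ℝ => -y ^ 2 / 2) (-(2 * x ^ 1) / 2) x :=
    ((hasDerivAt_pow 2 x).neg).div_const 2
  have h2 := (h1.exp).const_mul ((Real.sqrt (2 * π))⁻¹)
  rw [phi_def]
  convert h2 using 1
  show -x * ((Real.sqrt (2 * π))⁻¹ * Real.exp (-x ^ 2 / 2)) = _
  ring
  all_goals rfl

lemma phi_integrable : Integrable phi := integrable_gaussianPDFReal 0 1

lemma abs_pow_mul_phi_integrable (n : ℕ) : Integrable (fun x : ℝ => |x| ^ n * phi x) := by
  have hn : (-1 : ℝ) < (n : ℝ) := lt_of_lt_of_le neg_one_lt_zero (Nat.cast_nonneg n)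
  have h := (integrable_rpow_mul_exp_neg_mul_sq (b := 2⁻¹) (by norm_num) hn).abs
  refine (h.const_mul ((Real.sqrt (2 * π))⁻¹)).congr (Filter.Eventually.of_forall fun x => ?_)
  show (Real.sqrt (2 * π))⁻¹ * |x ^ (n : ℝ) * Real.exp (-2⁻¹ * x ^ 2)| = |x| ^ n * phi x
  rw [Real.rpow_natCast, abs_mul, abs_pow, abs_of_pos (Real.exp_pos _), phi_eq,
    show (-x ^ 2 / 2 : ℝ) = -2⁻¹ * x ^ 2 by ring]
  ring

lemma integral_stdGauss (g : ℝ → ℝ) :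
    ∫ z, g z ∂stdGauss = ∫ z, phi z * g z := by
  have h1 : stdGauss = MeasureTheory.volume.withDensity (gaussianPDF 0 1) := by
    rw [stdGauss, gaussianReal_of_var_ne_zero 0 one_ne_zero]
  have h2 : (gaussianPDF 0 1) = fun x => ((phi x).toNNReal : ENNReal) := rfl
  have hm : Measurable fun x => (phi x).toNNReal :=
    (measurable_gaussianPDFReal 0 1).real_toNNReal
  rw [h1, h2, integral_withDensity_eq_integral_smul hm g]
  congr 1
  funext x
  rw [NNReal.smul_def, Real.coe_toNNReal _ (phi_nonneg x), smul_eq_mul]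

end Phi

section InnerIntegral

lemma integral_z_phi : ∫ z : ℝ, z * phi z = 0 := by
  have hder : ∀ z : ℝ, HasDerivAt (fun y => -phi y) (z * phi z) z := by
    intro z
    have := (phi_hasDerivAt z).neg
    refine this.congr_deriv ?_
    ring
  have hint : Integrable (fun z : ℝ => z * phi z) := by
    refine (abs_pow_mul_phi_integrable 1).mono'
      ((continuous_id.mul phi_continuous).aestronglyMeasurable)
      (Filter.Eventually.of_forall fun z => ?_)
    rw [Real.norm_eq_abs, abs_mul, abs_of_nonneg (phi_nonneg z), pow_one]
  exact integral_eq_zero_of_hasDerivAt_of_integrable hder hint phi_integrable.neg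

variable {ρ : ℝ → ℝ} {b c₀ τ : ℝ}

lemma inner_eq (hconv : ConvexOn ℝ Set.univ ρ) (hbdd : BddBelow (Set.range ρ))
    (hd1 : Differentiable ℝ ρ) (hd2 : Differentiable ℝ (deriv ρ))
    (hc₀ : IsMinOn ρ Set.univ c₀) (hτ : 0 < τ) (hb : 0 < b) (w : ℝ) :
    ∫ z, effScoreD ρ b (w + τ * z) ∂stdGauss
      = 1 - τ⁻¹ * ∫ z, (prox ρ b (w + τ * z) - c₀) * z * phi z := by
  set r : ℝ → ℝ := fun z => prox ρ b (w + τ * z) with hr_def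
  set q : ℝ → ℝ := fun z => (1 + b * deriv (deriv ρ) (r z))⁻¹ with hq_def
  have hcontr : Continuous r :=
    (prox_continuous hconv hbdd hd1 hb).comp (by fun_prop)
  have hq_meas : Measurable q := by
    apply Measurable.inv
    exact (((measurable_deriv (deriv ρ)).comp hcontr.measurable).const_mul b).const_add 1
  have hqpos : ∀ z, 0 < 1 + b * deriv (deriv ρ) (r z) := fun z => by
    have := deriv2_nonneg hconv hd1 hd2 (r z)
    nlinarith
  have hq01 : ∀ z, 0 < q z ∧ q z ≤ 1 := fun z => by
    constructor
    · exact inv_pos.mpr (hqpos z)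
    · rw [hq_def]
      refine inv_le_one_of_one_le₀ ?_
      have := mul_nonneg hb.le (deriv2_nonneg hconv hd1 hd2 (r z))
      linarith
  have hKb : ∀ z : ℝ, |r z - c₀| ≤ |w - c₀| + τ * |z| := fun z => by
    have h1 := prox_dist_c₀ hconv hbdd hd1 hc₀ hb (w + τ * z)
    calc |r z - c₀| ≤ |w + τ * z - c₀| := h1
      _ = |(w - c₀) + τ * z| := by ring_nf
      _ ≤ |w - c₀| + |τ * z| := abs_add_le _ _
      _ = |w - c₀| + τ * |z| := by rw [abs_mul, abs_of_pos hτ]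
  -- Step 1: rewrite the integrand
  have step1 : ∫ z, effScoreD ρ b (w + τ * z) ∂stdGauss = ∫ z, (1 - q z) ∂stdGauss := by
    congr 1
    funext z
    exact effScoreD_eq hconv hbdd hd1 hd2 hb (w + τ * z)
  -- Step 2: split the integral
  have hqint : Integrable q stdGauss := by
    refine (integrable_const (1 : ℝ)).mono' hq_meas.aestronglyMeasurable
      (Filter.Eventually.of_forall fun z => ?_)
    rw [Real.norm_eq_abs, abs_of_pos (hq01 z).1]
    exact (hq01 z).2
  have step2 : ∫ z, (1 - q z) ∂stdGauss = 1 - ∫ z, q z ∂stdGauss := by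
    rw [integral_sub (integrable_const 1) hqint, integral_const]
    simp
  -- Step 3: convert to Lebesgue
  have step3 : ∫ z, q z ∂stdGauss = ∫ z, phi z * q z := integral_stdGauss q
  -- Step 4: integration by parts via FTC on ℝ
  set K : ℝ := |w - c₀| + |c₀| with hK_def
  have hrabs : ∀ z : ℝ, |r z| ≤ K + τ * |z| := fun z => by
    have := hKb z
    have h2 : |r z| ≤ |r z - c₀| + |c₀| := by
      calc |r z| = |(r z - c₀) + c₀| := by ring_nf
        _ ≤ |r z - c₀| + |c₀| := abs_add_le _ _
    linarith
  have hinner : ∀ z : ℝ, HasDerivAt (fun y : ℝ => w + τ * y) τ z := fun z => by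
    simpa using ((hasDerivAt_id z).const_mul τ).const_add w
  have hrder : ∀ z : ℝ, HasDerivAt r (q z * τ) z := fun z =>
    (prox_hasDerivAt hconv hbdd hd1 hd2 hb (w + τ * z)).comp (h₂ := prox ρ b) z (hinner z)
  have hFder : ∀ z : ℝ, HasDerivAt (fun y => r y * phi y)
      (q z * τ * phi z + r z * (-z * phi z)) z := fun z =>
    (hrder z).mul (phi_hasDerivAt z)
  have hFint : Integrable (fun z => r z * phi z) := by
    refine ((phi_integrable.const_mul K).add
      ((abs_pow_mul_phi_integrable 1).const_mul τ)).mono'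
      ((hcontr.mul phi_continuous).aestronglyMeasurable)
      (Filter.Eventually.of_forall fun z => ?_)
    simp only [Pi.add_apply]
    rw [Real.norm_eq_abs, abs_mul, abs_of_nonneg (phi_nonneg z), pow_one]
    have h1 : |r z| * phi z ≤ (K + τ * |z|) * phi z :=
      mul_le_mul_of_nonneg_right (hrabs z) (phi_nonneg z)
    calc |r z| * phi z ≤ (K + τ * |z|) * phi z := h1
      _ = K * phi z + τ * (|z| * phi z) := by ring
  have hAint : Integrable (fun z => q z * τ * phi z) := by
    refine (phi_integrable.const_mul τ).mono'
      (((hq_meas.mul_const τ).mul phi_continuous.measurable).aestronglyMeasurable)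
      (Filter.Eventually.of_forall fun z => ?_)
    rw [Real.norm_eq_abs, abs_mul, abs_mul, abs_of_pos (hq01 z).1, abs_of_pos hτ,
      abs_of_nonneg (phi_nonneg z)]
    nlinarith [mul_le_mul_of_nonneg_right (hq01 z).2
      (mul_nonneg hτ.le (phi_nonneg z))]
  have hBint : Integrable (fun z => r z * (-z * phi z)) := by
    refine (((abs_pow_mul_phi_integrable 1).const_mul K).add
      ((abs_pow_mul_phi_integrable 2).const_mul τ)).mono'
      ((hcontr.mul (continuous_id.neg.mul phi_continuous)).aestronglyMeasurable)
      (Filter.Eventually.of_forall fun z => ?_)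
    simp only [Pi.add_apply]
    rw [Real.norm_eq_abs, abs_mul, abs_mul, abs_neg, abs_of_nonneg (phi_nonneg z)]
    have h1 : |r z| * (|z| * phi z) ≤ (K + τ * |z|) * (|z| * phi z) :=
      mul_le_mul_of_nonneg_right (hrabs z) (mul_nonneg (abs_nonneg z) (phi_nonneg z))
    calc |r z| * (|z| * phi z) ≤ (K + τ * |z|) * (|z| * phi z) := h1
      _ = K * (|z| ^ 1 * phi z) + τ * (|z| ^ 2 * phi z) := by ring
  have hsum : (∫ z, q z * τ * phi z) + ∫ z, r z * (-z * phi z) = 0 := by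
    rw [← integral_add hAint hBint]
    exact integral_eq_zero_of_hasDerivAt_of_integrable hFder (hAint.add hBint) hFint
  have hA_eq : (∫ z, q z * τ * phi z) = τ * ∫ z, phi z * q z := by
    rw [← integral_const_mul]
    congr 1
    funext z
    ring
  have hB_eq : (∫ z, r z * (-z * phi z)) = -∫ z, r z * z * phi z := by
    rw [← integral_neg]
    congr 1
    funext z
    ring
  have step4 : τ * (∫ z, phi z * q z) = ∫ z, r z * z * phi z := by
    rw [← hA_eq]
    have := hB_eq
    linarith [hsum, hB_eq]
  -- Step 6: recenter
  have hzphi_int : Integrable (fun z : ℝ => z * phi z) := by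
    refine (abs_pow_mul_phi_integrable 1).mono'
      ((continuous_id.mul phi_continuous).aestronglyMeasurable)
      (Filter.Eventually.of_forall fun z => ?_)
    rw [Real.norm_eq_abs, abs_mul, abs_of_nonneg (phi_nonneg z), pow_one]
  have hCint : Integrable (fun z => (r z - c₀) * z * phi z) := by
    refine (((abs_pow_mul_phi_integrable 1).const_mul (|w - c₀|)).add
      ((abs_pow_mul_phi_integrable 2).const_mul τ)).mono'
      ((((hcontr.sub continuous_const).mul continuous_id).mul
        phi_continuous).aestronglyMeasurable)
      (Filter.Eventually.of_forall fun z => ?_)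
    simp only [Pi.add_apply]
    rw [Real.norm_eq_abs, abs_mul, abs_mul, abs_of_nonneg (phi_nonneg z)]
    have h1 : |r z - c₀| * |z| * phi z ≤ (|w - c₀| + τ * |z|) * (|z| * phi z) := by
      rw [mul_assoc]
      exact mul_le_mul_of_nonneg_right (hKb z)
        (mul_nonneg (abs_nonneg z) (phi_nonneg z))
    calc |r z - c₀| * |z| * phi z ≤ (|w - c₀| + τ * |z|) * (|z| * phi z) := h1
      _ = |w - c₀| * (|z| ^ 1 * phi z) + τ * (|z| ^ 2 * phi z) := by ring
  have step6 : (∫ z, r z * z * phi z) = ∫ z, (r z - c₀) * z * phi z := by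
    have heq : (fun z => r z * z * phi z)
        = fun z => (r z - c₀) * z * phi z + c₀ * (z * phi z) := by
      funext z; ring
    rw [heq, integral_add hCint (hzphi_int.const_mul c₀), integral_const_mul,
      integral_z_phi]
    ring
  -- assemble
  rw [step1, step2, step3]
  have hphiq : (∫ z, phi z * q z) = τ⁻¹ * ∫ z, (r z - c₀) * z * phi z := by
    rw [← step6, ← step4]
    field_simp
  rw [hphiq]

end InnerIntegral

section PointBound

variable {ρ : ℝ → ℝ} {b c₀ τ : ℝ}

lemma point_bound (hconv : ConvexOn ℝ Set.univ ρ) (hbdd : BddBelow (Set.range ρ))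
    (hd1 : Differentiable ℝ ρ) (hc₀ : IsMinOn ρ Set.univ c₀) (hτ : 0 < τ)
    (hb : 0 < b) (w z : ℝ) :
    ‖(prox ρ b (w + τ * z) - c₀) * z * phi z‖
      ≤ |w - c₀| * (|z| ^ 1 * phi z) + τ * (|z| ^ 2 * phi z) := by
  have hKb : |prox ρ b (w + τ * z) - c₀| ≤ |w - c₀| + τ * |z| := by
    have h1 := prox_dist_c₀ hconv hbdd hd1 hc₀ hb (w + τ * z)
    calc |prox ρ b (w + τ * z) - c₀| ≤ |w + τ * z - c₀| := h1
      _ = |(w - c₀) + τ * z| := by ring_nf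
      _ ≤ |w - c₀| + |τ * z| := abs_add_le _ _
      _ = |w - c₀| + τ * |z| := by rw [abs_mul, abs_of_pos hτ]
  rw [Real.norm_eq_abs, abs_mul, abs_mul, abs_of_nonneg (phi_nonneg z)]
  have h1 : |prox ρ b (w + τ * z) - c₀| * |z| * phi z
      ≤ (|w - c₀| + τ * |z|) * (|z| * phi z) := by
    rw [mul_assoc]
    exact mul_le_mul_of_nonneg_right hKb (mul_nonneg (abs_nonneg z) (phi_nonneg z))
  calc |prox ρ b (w + τ * z) - c₀| * |z| * phi z
      ≤ (|w - c₀| + τ * |z|) * (|z| * phi z) := h1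
    _ = |w - c₀| * (|z| ^ 1 * phi z) + τ * (|z| ^ 2 * phi z) := by ring

lemma Jbound_integrable (w : ℝ) {τ c₀ : ℝ} :
    Integrable (fun z : ℝ => |w - c₀| * (|z| ^ 1 * phi z) + τ * (|z| ^ 2 * phi z)) :=
  ((abs_pow_mul_phi_integrable 1).const_mul _).add
    ((abs_pow_mul_phi_integrable 2).const_mul _)

end PointBound


/-- for a convex, bounded-below, twice differentiable loss with bounded
second derivative and unique minimizer `c₀`, and `W` with finite second moment,
`G(b) = E[Ψ'(W+τZ;b)]` is continuous on `(0,∞)`, tends to `0` at `0⁺` and to `1` at `∞`;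
hence for every `a ∈ (0,1)` the solution set `S_a = {b > 0 : G(b) = a}` is closed and
nonempty. -/
theorem effScoreD_expectation_limits
    (ρ : ℝ → ℝ) (hconv : ConvexOn ℝ Set.univ ρ) (hbdd : BddBelow (Set.range ρ))
    (hd1 : Differentiable ℝ ρ) (hd2 : Differentiable ℝ (deriv ρ))
    (hbdd2 : BddAbove (Set.range (deriv (deriv ρ))))
    (c₀ : ℝ) (hc₀ : IsMinOn ρ Set.univ c₀)
    (hc₀uniq : ∀ x, IsMinOn ρ Set.univ x → x = c₀)
    (τ : ℝ) (hτ : 0 < τ)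
    (μ : Measure ℝ) [IsProbabilityMeasure μ]
    (hμ2 : Integrable (fun x => x ^ 2) μ)
    (G : ℝ → ℝ)
    (hG : ∀ b, G b = ∫ w, ∫ z, effScoreD ρ b (w + τ * z) ∂stdGauss ∂μ) :
    ContinuousOn G (Ioi 0) ∧
    Tendsto G (nhdsWithin 0 (Ioi 0)) (nhds 0) ∧
    Tendsto G atTop (nhds 1) ∧
    ∀ a ∈ Ioo (0 : ℝ) 1,
      IsClosed {b : ℝ | 0 < b ∧ G b = a} ∧ {b : ℝ | 0 < b ∧ G b = a}.Nonempty := by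
  obtain ⟨M₀, hM₀⟩ := hbdd2
  set M := max M₀ 0 with hM_def
  have hM : ∀ x, deriv (deriv ρ) x ≤ M := fun x =>
    le_trans (hM₀ (mem_range_self x)) (le_max_left _ _)
  have hMnn : (0 : ℝ) ≤ M := le_max_right _ _
  set I : ℝ → ℝ → ℝ := fun b w => ∫ z, effScoreD ρ b (w + τ * z) ∂stdGauss with hI_def
  set J : ℝ → ℝ → ℝ := fun b w => ∫ z, (prox ρ b (w + τ * z) - c₀) * z * phi z with hJ_def
  have hGfun : G = fun b => ∫ w, I b w ∂μ := funext hG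
  have hIJ : ∀ b, 0 < b → ∀ w, I b w = 1 - τ⁻¹ * J b w := fun b hb w =>
    inner_eq hconv hbdd hd1 hd2 hc₀ hτ hb w
  -- integrability of the inner integrand
  have hint : ∀ b w, 0 < b → Integrable (fun z => effScoreD ρ b (w + τ * z)) stdGauss := by
    intro b w hb
    refine (integrable_const (1 : ℝ)).mono'
      (((measurable_deriv (effScore ρ b)).comp
        ((measurable_id.const_mul τ).const_add w)).aestronglyMeasurable)
      (Filter.Eventually.of_forall fun z => ?_)
    rw [Real.norm_eq_abs, abs_of_nonneg (effScoreD_nonneg hconv hbdd hd1 hd2 hb _)]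
    exact effScoreD_le_one hconv hbdd hd1 hd2 hb _
  -- bounds on I
  have hInn : ∀ b w, 0 < b → 0 ≤ I b w := fun b w hb =>
    integral_nonneg fun z => effScoreD_nonneg hconv hbdd hd1 hd2 hb _
  have hIle1 : ∀ b w, 0 < b → I b w ≤ 1 := by
    intro b w hb
    have h := integral_mono (hint b w hb) (integrable_const 1)
      (fun z => effScoreD_le_one hconv hbdd hd1 hd2 hb _)
    simpa using h
  have hIleM : ∀ b w, 0 < b → I b w ≤ b * M := by
    intro b w hb
    have h := integral_mono (hint b w hb) (integrable_const (b * M))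
      (fun z => effScoreD_le_mul hconv hbdd hd1 hd2 hM hb _)
    simpa using h
  -- measurability of I b in w
  have hImeas : ∀ b, AEStronglyMeasurable (fun w => I b w) μ := by
    intro b
    have hm : StronglyMeasurable fun p : ℝ × ℝ => effScoreD ρ b (p.1 + τ * p.2) :=
      ((measurable_deriv (effScore ρ b)).comp
        (measurable_fst.add (measurable_snd.const_mul τ))).stronglyMeasurable
    exact hm.integral_prod_right'.aestronglyMeasurable
  -- continuity of J in b
  have hJcont : ∀ b₀ w, 0 < b₀ →
      Tendsto (fun b => J b w) (nhdsWithin b₀ (Ioi 0)) (nhds (J b₀ w)) := by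
    intro b₀ w hb₀
    refine tendsto_integral_filter_of_dominated_convergence
      (fun z => |w - c₀| * (|z| ^ 1 * phi z) + τ * (|z| ^ 2 * phi z))
      ?_ ?_ (Jbound_integrable w) ?_
    · filter_upwards [self_mem_nhdsWithin] with b (hb : b ∈ Ioi 0)
      exact (((((prox_continuous hconv hbdd hd1 hb).comp
        (continuous_const.add (continuous_const.mul continuous_id))).sub
        continuous_const).mul continuous_id).mul phi_continuous).aestronglyMeasurable
    · filter_upwards [self_mem_nhdsWithin] with b (hb : b ∈ Ioi 0)
      exact Filter.Eventually.of_forall fun z => point_bound hconv hbdd hd1 hc₀ hτ hb w z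
    · refine Filter.Eventually.of_forall fun z => ?_
      have h := ((prox_tendsto_b hconv hbdd hd1 hb₀ (w + τ * z)).sub_const c₀).mul_const
        (z * phi z)
      simpa [mul_assoc] using h
  -- limit of J at infinity
  have hJtop : ∀ w, Tendsto (fun b => J b w) atTop (nhds 0) := by
    intro w
    have h0 : (0 : ℝ) = ∫ z : ℝ, (0 : ℝ) := by simp
    rw [h0]
    refine tendsto_integral_filter_of_dominated_convergence
      (fun z => |w - c₀| * (|z| ^ 1 * phi z) + τ * (|z| ^ 2 * phi z))
      ?_ ?_ (Jbound_integrable w) ?_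
    · filter_upwards [eventually_gt_atTop 0] with b hb
      exact (((((prox_continuous hconv hbdd hd1 hb).comp
        (continuous_const.add (continuous_const.mul continuous_id))).sub
        continuous_const).mul continuous_id).mul phi_continuous).aestronglyMeasurable
    · filter_upwards [eventually_gt_atTop 0] with b hb
      exact Filter.Eventually.of_forall fun z => point_bound hconv hbdd hd1 hc₀ hτ hb w z
    · refine Filter.Eventually.of_forall fun z => ?_
      have h := ((prox_tendsto_atTop hconv hbdd hd1 hc₀ hc₀uniq (w + τ * z)).sub_const
        c₀).mul_const (z * phi z)
      simpa [mul_assoc] using h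
  -- pointwise limits of I
  have hIcont : ∀ b₀ w, 0 < b₀ →
      Tendsto (fun b => I b w) (nhdsWithin b₀ (Ioi 0)) (nhds (I b₀ w)) := by
    intro b₀ w hb₀
    have h1 : Tendsto (fun b => 1 - τ⁻¹ * J b w) (nhdsWithin b₀ (Ioi 0))
        (nhds (1 - τ⁻¹ * J b₀ w)) :=
      tendsto_const_nhds.sub ((hJcont b₀ w hb₀).const_mul τ⁻¹)
    rw [← hIJ b₀ hb₀ w] at h1
    refine h1.congr' ?_
    filter_upwards [self_mem_nhdsWithin] with b (hb : b ∈ Ioi 0)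
    exact (hIJ b hb w).symm
  have hItop : ∀ w, Tendsto (fun b => I b w) atTop (nhds 1) := by
    intro w
    have h1 : Tendsto (fun b => 1 - τ⁻¹ * J b w) atTop (nhds (1 - τ⁻¹ * 0)) :=
      tendsto_const_nhds.sub ((hJtop w).const_mul τ⁻¹)
    rw [show (1 : ℝ) - τ⁻¹ * 0 = 1 by ring] at h1
    refine h1.congr' ?_
    filter_upwards [eventually_gt_atTop 0] with b hb
    exact (hIJ b hb w).symm
  -- Part 1 : continuity
  have Hcont : ContinuousOn G (Ioi 0) := by
    intro b₀ hb₀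
    have : Tendsto G (nhdsWithin b₀ (Ioi 0)) (nhds (G b₀)) := by
      rw [hGfun]
      refine tendsto_integral_filter_of_dominated_convergence (fun _ => (1 : ℝ))
        (Filter.Eventually.of_forall fun b => hImeas b) ?_ (integrable_const 1) ?_
      · filter_upwards [self_mem_nhdsWithin] with b (hb : b ∈ Ioi 0)
        exact Filter.Eventually.of_forall fun w => by
          rw [Real.norm_eq_abs, abs_of_nonneg (hInn b w hb)]
          exact hIle1 b w hb
      · exact Filter.Eventually.of_forall fun w => hIcont b₀ w hb₀
    exact this
  -- Part 2 : limit at 0⁺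
  have H0 : Tendsto G (nhdsWithin 0 (Ioi 0)) (nhds 0) := by
    have hup : ∀ᶠ b in nhdsWithin 0 (Ioi 0), G b ≤ b * M := by
      filter_upwards [self_mem_nhdsWithin] with b (hb : b ∈ Ioi 0)
      rw [hGfun]
      have hIint : Integrable (fun w => I b w) μ := by
        refine (integrable_const (1 : ℝ)).mono' (hImeas b)
          (Filter.Eventually.of_forall fun w => ?_)
        rw [Real.norm_eq_abs, abs_of_nonneg (hInn b w hb)]
        exact hIle1 b w hb
      have h := integral_mono hIint (integrable_const (b * M)) (fun w => hIleM b w hb)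
      simpa using h
    have hlo : ∀ᶠ b in nhdsWithin 0 (Ioi 0), 0 ≤ G b := by
      filter_upwards [self_mem_nhdsWithin] with b (hb : b ∈ Ioi 0)
      rw [hGfun]
      exact integral_nonneg fun w => hInn b w hb
    have hg : Tendsto (fun b : ℝ => b * M) (nhdsWithin 0 (Ioi 0)) (nhds 0) := by
      have : Tendsto (fun b : ℝ => b * M) (nhds 0) (nhds (0 * M)) :=
        (continuous_id.mul continuous_const).tendsto 0
      rw [zero_mul] at this
      exact this.mono_left nhdsWithin_le_nhds
    exact squeeze_zero' hlo hup hg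
  -- Part 3 : limit at infinity
  have Htop : Tendsto G atTop (nhds 1) := by
    rw [hGfun]
    have h1 : (1 : ℝ) = ∫ _ : ℝ, (1 : ℝ) ∂μ := by simp
    rw [h1]
    refine tendsto_integral_filter_of_dominated_convergence (fun _ => (1 : ℝ))
      (Filter.Eventually.of_forall fun b => hImeas b) ?_ (integrable_const 1)
      (Filter.Eventually.of_forall fun w => hItop w)
    filter_upwards [eventually_gt_atTop 0] with b hb
    exact Filter.Eventually.of_forall fun w => by
      rw [Real.norm_eq_abs, abs_of_nonneg (hInn b w hb)]
      exact hIle1 b w hb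
  refine ⟨Hcont, H0, Htop, ?_⟩
  -- Part 4
  intro a ha
  obtain ⟨ha0, ha1⟩ := ha
  have hev0 : ∀ᶠ b in nhdsWithin 0 (Ioi 0), G b < a := H0.eventually_lt_const ha0
  rw [eventually_nhdsWithin_iff, Metric.eventually_nhds_iff] at hev0
  obtain ⟨ε, hε, hεa⟩ := hev0
  have hevtop : ∀ᶠ b in atTop, a < G b := Htop.eventually_const_lt ha1
  obtain ⟨B, hB⟩ := eventually_atTop.mp hevtop
  have hεa' : ∀ b : ℝ, 0 < b → b < ε → G b < a := by
    intro b hb hbe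
    exact hεa (by rw [Real.dist_eq, sub_zero, abs_of_pos hb]; exact hbe) hb
  constructor
  · -- closedness
    have hSsub : {b : ℝ | 0 < b ∧ G b = a} = Icc ε B ∩ G ⁻¹' {a} := by
      ext b
      simp only [mem_setOf_eq, mem_inter_iff, mem_Icc, mem_preimage, mem_singleton_iff]
      constructor
      · rintro ⟨hb, hGb⟩
        refine ⟨⟨?_, ?_⟩, hGb⟩
        · by_contra hc
          push_neg at hc
          exact absurd hGb (hεa' b hb hc).ne
        · by_contra hc
          push_neg at hc
          exact absurd hGb.symm (hB b hc.le).ne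
      · rintro ⟨⟨h1, _⟩, hGb⟩
        exact ⟨lt_of_lt_of_le hε h1, hGb⟩
    rw [hSsub]
    exact (Hcont.mono fun x hx => lt_of_lt_of_le hε hx.1).preimage_isClosed_of_isClosed
      isClosed_Icc isClosed_singleton
  · -- nonemptiness
    set b₁ : ℝ := ε / 2 with hb₁_def
    have hb₁pos : 0 < b₁ := by positivity
    have hGb₁ : G b₁ < a := hεa' b₁ hb₁pos (by rw [hb₁_def]; linarith)
    set b₂ : ℝ := max B (b₁ + 1) with hb₂_def
    have hb₁₂ : b₁ ≤ b₂ := le_trans (by linarith) (le_max_right _ _)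
    have hGb₂ : a < G b₂ := hB b₂ (le_max_left _ _)
    have hIcc : Icc b₁ b₂ ⊆ Ioi 0 := fun x hx => lt_of_lt_of_le hb₁pos hx.1
    have hivt := intermediate_value_Icc hb₁₂ (Hcont.mono hIcc)
    have hmem : a ∈ Icc (G b₁) (G b₂) := ⟨hGb₁.le, hGb₂.le⟩
    obtain ⟨x, hx, hGx⟩ := hivt hmem
    exact ⟨x, lt_of_lt_of_le hb₁pos hx.1, hGx⟩
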